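/- Every shortcut group is finitely presented. In particular, if a group G acts by graph automorphisms on a connected simplicial graph Γ with finite vertex stabilizers and finitely many orbits of vertices and edges, and there is a bound θ on the lengths of the isometric cycles of Γ, then G admits a finite presentation. -/
import Mathlib


open scoped Classical

noncomputable section

namespace ShortcutGraphs

/-- Path metric on (the geometric realization of) the cycle graph `C` with `n` edges:
points of `C` are parametrized by `ℝ` modulo `n`, with each edge isometric to `[0,1]`. -/
def cdist (n : ℕ) (p q : ℝ) : ℝ := ⨅ k : ℤ, |p - q + k * (n : ℝ)|

lemma cdist_eq (n : ℕ) (hn : 1 ≤ n) (p q e : ℝ) (he0 : 0 ≤ e) (hen : e ≤ n)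
    (hcong : ∃ m : ℤ, p - q = e + m * n) : cdist n p q = min e ((n : ℝ) - e) := by
  obtain ⟨m, hm⟩ := hcong
  have hnpos : (0:ℝ) < n := by exact_mod_cast hn
  have hbdd : BddBelow (Set.range fun k : ℤ => |p - q + k * (n:ℝ)|) := by
    refine ⟨0, ?_⟩
    rintro x ⟨k, rfl⟩
    positivity
  apply le_antisymm
  · apply le_min
    · calc cdist n p q ≤ |p - q + ((-m : ℤ)) * n| := ciInf_le hbdd (-m)
        _ = e := by rw [hm]; push_cast; rw [show e + m*(n:ℝ) + -m*n = e by ring, abs_of_nonneg he0]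
    · calc cdist n p q ≤ |p - q + ((-m-1 : ℤ)) * n| := ciInf_le hbdd (-m-1)
        _ = n - e := by
            rw [hm]; push_cast
            rw [show e + m*(n:ℝ) + (-m-1)*n = -((n:ℝ) - e) by ring, abs_neg,
              abs_of_nonneg (by linarith)]
  · apply le_ciInf
    intro k
    rw [hm, show e + m*(n:ℝ) + k*n = e + (m+k)*(n:ℝ) by ring]
    rcases le_or_gt 0 (m+k) with h | h
    · have h2 : (0:ℝ) ≤ ((m:ℝ)+k) * n := by
        have h3 : (0:ℝ) ≤ ((m+k : ℤ) : ℝ) := by exact_mod_cast h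
        push_cast at h3
        positivity
      calc min e ((n:ℝ)-e) ≤ e := min_le_left _ _
        _ ≤ |e + (m+k)*(n:ℝ)| := by rw [abs_of_nonneg (by linarith)]; linarith
    · have h1 : (m+k : ℤ) ≤ -1 := by omega
      have h2 : ((m:ℝ)+k) * n ≤ -1 * n := by
        apply mul_le_mul_of_nonneg_right _ hnpos.le
        have : ((m+k:ℤ):ℝ) ≤ ((-1:ℤ):ℝ) := by exact_mod_cast h1
        push_cast at this; linarith
      calc min e ((n:ℝ)-e) ≤ n - e := min_le_right _ _
        _ ≤ |e + (m+k)*(n:ℝ)| := by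
            rw [abs_of_nonpos (by linarith), neg_add]; linarith



variable {V : Type*}

/-- A cycle of length `n` in the simplicial graph `G`: a nondegenerate combinatorial map
from the cycle graph with `n` edges, recorded by the images of its vertices `0, 1, …, n-1`
(indexed by `ZMod n`); consecutive vertices map to adjacent vertices of `G`. -/
def IsCycle (G : SimpleGraph V) (n : ℕ) (c : ZMod n → V) : Prop :=
  ∀ i : ZMod n, G.Adj (c i) (c (i + 1))

/-- Distance, in the geometric realization of the graph `G` (each edge isometric to `[0,1]`,
equipped with the path metric), between the images under the cycle `c` of the points of the
cycle graph parametrized by `p` and `q`.  The point parametrized by `p` lies on the edge of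
the cycle joining vertex `⌊p⌋` to vertex `⌊p⌋ + 1`, at distance `p - ⌊p⌋` from the former; a
geodesic between two points of a graph either stays within one closed edge (the `if` terms)
or consists of a piece of an edge, a geodesic between two vertices, and a piece of an edge
(the `route` term). -/
def rdist (G : SimpleGraph V) (n : ℕ) (c : ZMod n → V) (p q : ℝ) : ℝ :=
  let i : ZMod n := ((⌊p⌋ : ℤ) : ZMod n)
  let j : ZMod n := ((⌊q⌋ : ℤ) : ZMod n)
  let s : ℝ := Int.fract p
  let t : ℝ := Int.fract q
  let a : V := c i
  let b : V := c (i + 1)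
  let u : V := c j
  let v : V := c (j + 1)
  let route : ℝ :=
    min (min (s + (G.dist a u : ℝ) + t) (s + (G.dist a v : ℝ) + (1 - t)))
        (min ((1 - s) + (G.dist b u : ℝ) + t) ((1 - s) + (G.dist b v : ℝ) + (1 - t)))
  min route
    (min (if a = u ∧ b = v then |s - t| else route)
         (if a = v ∧ b = u then |s + t - 1| else route))

/-- Two points of the cycle graph with `n` edges are antipodal if their distance is `n/2`. -/
def Antipodal (n : ℕ) (p q : ℝ) : Prop := cdist n p q = (n : ℝ) / 2

/-- The cycle `c` is isometric: it is an isometric embedding at the level of all points of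
the geometric realizations. -/
def IsIsometricCycle (G : SimpleGraph V) (n : ℕ) (c : ZMod n → V) : Prop :=
  ∀ p q : ℝ, rdist G n c p q = cdist n p q

/-- The cycle `c` is `ξ`-almost isometric: `d_Γ(f(p), f(q)) ≥ ξ·|C|/2` for every antipodal
pair of points `p, q` of the cycle. -/
def IsAlmostIsometricCycle (G : SimpleGraph V) (n : ℕ) (c : ZMod n → V) (ξ : ℝ) : Prop :=
  ∀ p q : ℝ, Antipodal n p q → ξ * ((n : ℝ) / 2) ≤ rdist G n c p q

/-- A graph is shortcut if there is a bound `θ` on the lengths of its isometric cycles. -/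
def Shortcut (G : SimpleGraph V) : Prop :=
  ∃ θ : ℕ, ∀ (n : ℕ) (c : ZMod n → V), 0 < n → IsCycle G n c → IsIsometricCycle G n c → n ≤ θ

/-- A graph is strongly shortcut if for some `ξ ∈ (0,1)` there is a bound `θ` on the lengths
of its `ξ`-almost isometric cycles. -/
def StronglyShortcut (G : SimpleGraph V) : Prop :=
  ∃ (θ : ℕ) (ξ : ℝ), 0 < ξ ∧ ξ < 1 ∧
    ∀ (n : ℕ) (c : ZMod n → V), 0 < n → IsCycle G n c → IsAlmostIsometricCycle G n c ξ → n ≤ θ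

/-- The group `Gp` acts on the graph `G` by graph automorphisms, via the permutation
representation `ρ`. -/
def IsGraphAction (Gp : Type) [Group Gp] {V : Type} (G : SimpleGraph V)
    (ρ : Gp →* Equiv.Perm V) : Prop :=
  ∀ (g : Gp) (u v : V), G.Adj (ρ g u) (ρ g v) ↔ G.Adj u v

/-- The action is proper: all vertex stabilizers are finite. -/
def ProperAction (Gp : Type) [Group Gp] {V : Type} (ρ : Gp →* Equiv.Perm V) : Prop :=
  ∀ v : V, {g : Gp | ρ g v = v}.Finite

/-- The action is cocompact: there are finitely many orbits of vertices and of edges. -/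
def CocompactAction (Gp : Type) [Group Gp] {V : Type} (G : SimpleGraph V)
    (ρ : Gp →* Equiv.Perm V) : Prop :=
  (∃ V₀ : Finset V, ∀ v : V, ∃ g : Gp, ∃ v₀ ∈ V₀, ρ g v₀ = v) ∧
  (∃ E₀ : Finset (V × V), ∀ u v : V, G.Adj u v →
      ∃ g : Gp, ∃ e ∈ E₀, ρ g e.1 = u ∧ ρ g e.2 = v)

/-- The action is free: no nontrivial element fixes a vertex. -/
def FreeAction (Gp : Type) [Group Gp] {V : Type} (ρ : Gp →* Equiv.Perm V) : Prop :=
  ∀ g : Gp, g ≠ 1 → ∀ v : V, ρ g v ≠ v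

/-- A group is shortcut if it acts properly and cocompactly on a shortcut graph
(a connected simplicial graph with a bound on the lengths of its isometric cycles). -/
def ShortcutGroup (Gp : Type) [Group Gp] : Prop :=
  ∃ (V : Type) (G : SimpleGraph V) (ρ : Gp →* Equiv.Perm V),
    G.Connected ∧ IsGraphAction Gp G ρ ∧ ProperAction Gp ρ ∧
      CocompactAction Gp G ρ ∧ Shortcut G

/-- A group is strongly shortcut if it acts properly and cocompactly on a strongly shortcut
graph. -/
def StronglyShortcutGroup (Gp : Type) [Group Gp] : Prop :=
  ∃ (V : Type) (G : SimpleGraph V) (ρ : Gp →* Equiv.Perm V),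
    G.Connected ∧ IsGraphAction Gp G ρ ∧ ProperAction Gp ρ ∧
      CocompactAction Gp G ρ ∧ StronglyShortcut G

/-- A group is finitely presented if it is isomorphic to a group presented by finitely many
generators and finitely many relators. -/
def FinitelyPresentedGroup (Gp : Type) [Group Gp] : Prop :=
  ∃ (k : ℕ) (rels : Finset (FreeGroup (Fin k))),
    Nonempty (Gp ≃* PresentedGroup ((rels : Set (FreeGroup (Fin k)))))

-- ### helper lemmas

lemma zmod_val_pos {n : ℕ} [NeZero n] {z : ZMod n} (hz : z ≠ 0) : 1 ≤ z.val :=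
  Nat.pos_of_ne_zero (fun h => hz ((ZMod.val_eq_zero z).mp h))

lemma zmod_cast_val {n : ℕ} [NeZero n] (z : ZMod n) : ((z.val : ℕ) : ZMod n) = z := by
  rw [ZMod.natCast_val, ZMod.cast_id]

lemma zmod_val_sub_one {n : ℕ} [NeZero n] {z : ZMod n} (hz : z ≠ 0) :
    (z - 1).val = z.val - 1 := by
  have h1 : 1 ≤ z.val := zmod_val_pos hz
  have h2 : z.val - 1 < n := lt_of_le_of_lt (Nat.sub_le _ _) (ZMod.val_lt z)
  have h3 : ((z.val - 1 : ℕ) : ZMod n) = z - 1 := by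
    have := zmod_cast_val z
    push_cast [h1] at *
    linear_combination this
  rw [← h3, ZMod.val_cast_of_lt h2]

lemma zmod_val_add_one {n : ℕ} [NeZero n] {z : ZMod n} (hz : z + 1 ≠ 0) :
    (z + 1).val = z.val + 1 := by
  have h2 : z.val + 1 ≤ n := ZMod.val_lt z
  rcases lt_or_eq_of_le h2 with h | h
  · have h3 : ((z.val + 1 : ℕ) : ZMod n) = z + 1 := by
      push_cast
      rw [zmod_cast_val]
    rw [← h3, ZMod.val_cast_of_lt h]
  · exfalso
    apply hz
    have h3 : ((z.val + 1 : ℕ) : ZMod n) = z + 1 := by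
      push_cast
      rw [zmod_cast_val]
    rw [← h3, h, ZMod.natCast_self]

lemma zmod_val_add_neg {n : ℕ} [NeZero n] {z : ZMod n} (hz : z ≠ 0) :
    z.val + (-z).val = n := by
  rw [ZMod.neg_val, if_neg hz]
  have := (ZMod.val_lt z).le
  omega

lemma exists_walk_of_cycle {G : SimpleGraph V} {n : ℕ} {c : ZMod n → V}
    (hc : IsCycle G n c) (a : ZMod n) (k : ℕ) :
    ∃ w : G.Walk (c a) (c (a + (k : ZMod n))), w.length = k := by
  induction k with
  | zero =>
      have h : a + ((0:ℕ):ZMod n) = a := by push_cast; ring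
      rw [h]
      exact ⟨SimpleGraph.Walk.nil, rfl⟩
  | succ k ih =>
      obtain ⟨w, hw⟩ := ih
      have hadj : G.Adj (c (a + (k : ZMod n))) (c (a + ((k+1 : ℕ) : ZMod n))) := by
        have h := hc (a + (k : ZMod n))
        have he : a + ((k+1 : ℕ) : ZMod n) = a + (k : ZMod n) + 1 := by push_cast; ring
        rw [he]
        exact h
      exact ⟨w.concat hadj, by rw [SimpleGraph.Walk.length_concat, hw]⟩


lemma dist_le_val {G : SimpleGraph V} {n : ℕ} [NeZero n] {c : ZMod n → V}
    (hc : IsCycle G n c) (a b : ZMod n) : G.dist (c a) (c b) ≤ (b - a).val := by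
  obtain ⟨w, hw⟩ := exists_walk_of_cycle hc a (b - a).val
  have hle := SimpleGraph.dist_le w
  rw [hw, zmod_cast_val, show a + (b - a) = b by ring] at hle
  exact hle

lemma dist_le_min_val {G : SimpleGraph V} {n : ℕ} [NeZero n] {c : ZMod n → V}
    (hc : IsCycle G n c) (a b : ZMod n) :
    G.dist (c a) (c b) ≤ min (a - b).val (b - a).val := by
  refine le_min ?_ (dist_le_val hc a b)
  rw [SimpleGraph.dist_comm]
  exact dist_le_val hc b a

lemma rdist_def (G : SimpleGraph V) (n : ℕ) (c : ZMod n → V) (p q : ℝ) :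
    rdist G n c p q =
      min (min (min (Int.fract p + (G.dist (c ((⌊p⌋ : ℤ) : ZMod n)) (c ((⌊q⌋ : ℤ) : ZMod n)) : ℝ) + Int.fract q)
                    (Int.fract p + (G.dist (c ((⌊p⌋ : ℤ) : ZMod n)) (c (((⌊q⌋ : ℤ) : ZMod n) + 1)) : ℝ) + (1 - Int.fract q)))
               (min ((1 - Int.fract p) + (G.dist (c (((⌊p⌋ : ℤ) : ZMod n) + 1)) (c ((⌊q⌋ : ℤ) : ZMod n)) : ℝ) + Int.fract q)
                    ((1 - Int.fract p) + (G.dist (c (((⌊p⌋ : ℤ) : ZMod n) + 1)) (c (((⌊q⌋ : ℤ) : ZMod n) + 1)) : ℝ) + (1 - Int.fract q))))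
        (min (if c ((⌊p⌋ : ℤ) : ZMod n) = c ((⌊q⌋ : ℤ) : ZMod n) ∧ c (((⌊p⌋ : ℤ) : ZMod n) + 1) = c (((⌊q⌋ : ℤ) : ZMod n) + 1)
              then |Int.fract p - Int.fract q|
              else min (min (Int.fract p + (G.dist (c ((⌊p⌋ : ℤ) : ZMod n)) (c ((⌊q⌋ : ℤ) : ZMod n)) : ℝ) + Int.fract q)
                    (Int.fract p + (G.dist (c ((⌊p⌋ : ℤ) : ZMod n)) (c (((⌊q⌋ : ℤ) : ZMod n) + 1)) : ℝ) + (1 - Int.fract q)))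
               (min ((1 - Int.fract p) + (G.dist (c (((⌊p⌋ : ℤ) : ZMod n) + 1)) (c ((⌊q⌋ : ℤ) : ZMod n)) : ℝ) + Int.fract q)
                    ((1 - Int.fract p) + (G.dist (c (((⌊p⌋ : ℤ) : ZMod n) + 1)) (c (((⌊q⌋ : ℤ) : ZMod n) + 1)) : ℝ) + (1 - Int.fract q))))
             (if c ((⌊p⌋ : ℤ) : ZMod n) = c (((⌊q⌋ : ℤ) : ZMod n) + 1) ∧ c (((⌊p⌋ : ℤ) : ZMod n) + 1) = c ((⌊q⌋ : ℤ) : ZMod n)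
              then |Int.fract p + Int.fract q - 1|
              else min (min (Int.fract p + (G.dist (c ((⌊p⌋ : ℤ) : ZMod n)) (c ((⌊q⌋ : ℤ) : ZMod n)) : ℝ) + Int.fract q)
                    (Int.fract p + (G.dist (c ((⌊p⌋ : ℤ) : ZMod n)) (c (((⌊q⌋ : ℤ) : ZMod n) + 1)) : ℝ) + (1 - Int.fract q)))
               (min ((1 - Int.fract p) + (G.dist (c (((⌊p⌋ : ℤ) : ZMod n) + 1)) (c ((⌊q⌋ : ℤ) : ZMod n)) : ℝ) + Int.fract q)
                    ((1 - Int.fract p) + (G.dist (c (((⌊p⌋ : ℤ) : ZMod n) + 1)) (c (((⌊q⌋ : ℤ) : ZMod n) + 1)) : ℝ) + (1 - Int.fract q))))) :=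
  rfl


lemma isometric_of_no_shortcut {G : SimpleGraph V} {n : ℕ} (hn : 3 ≤ n) {c : ZMod n → V}
    (hc : IsCycle G n c)
    (hlow : ∀ i j : ZMod n, min (i - j).val (j - i).val ≤ G.dist (c i) (c j)) :
    IsIsometricCycle G n c := by
  haveI : NeZero n := ⟨by omega⟩
  have hd : ∀ a b : ZMod n, (G.dist (c a) (c b) : ℝ) =
      min (((a - b).val : ℕ) : ℝ) (((b - a).val : ℕ) : ℝ) := by
    intro a b
    have h := le_antisymm (dist_le_min_val hc a b) (hlow a b)
    exact_mod_cast congrArg (Nat.cast : ℕ → ℝ) h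
  intro p q
  rw [rdist_def]
  set i : ZMod n := ((⌊p⌋ : ℤ) : ZMod n) with hi
  set j : ZMod n := ((⌊q⌋ : ℤ) : ZMod n) with hj
  set s := Int.fract p with hs
  set t := Int.fract q with ht
  have hs0 : 0 ≤ s := Int.fract_nonneg p
  have hs1 : s < 1 := Int.fract_lt_one p
  have ht0 : 0 ≤ t := Int.fract_nonneg q
  have ht1 : t < 1 := Int.fract_lt_one q
  have hp : ((⌊p⌋ : ℤ) : ℝ) + s = p := Int.floor_add_fract p
  have hq : ((⌊q⌋ : ℤ) : ℝ) + t = q := Int.floor_add_fract q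
  have hnR : (3:ℝ) ≤ n := by exact_mod_cast hn
  have hn1 : 1 ≤ n := by omega
  have hone : (1 : ZMod n).val = 1 := by
    haveI : Fact (1 < n) := ⟨by omega⟩
    exact ZMod.val_one n
  by_cases hij : i = j
  · -- p and q lie on the same edge
    rw [← hij]
    rw [if_pos ⟨rfl, rfl⟩, if_neg (fun h => (hc i).ne h.1)]
    have hd0 : (G.dist (c i) (c i) : ℝ) = 0 := by rw [SimpleGraph.dist_self]; norm_num
    have hd1 : (G.dist (c i) (c (i+1)) : ℝ) = 1 := by
      rw [SimpleGraph.dist_eq_one_iff_adj.mpr (hc i)]; norm_num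
    have hd2 : (G.dist (c (i+1)) (c i) : ℝ) = 1 := by
      rw [SimpleGraph.dist_eq_one_iff_adj.mpr (hc i).symm]; norm_num
    have hd3 : (G.dist (c (i+1)) (c (i+1)) : ℝ) = 0 := by rw [SimpleGraph.dist_self]; norm_num
    rw [hd0, hd1, hd2, hd3]
    obtain ⟨m, hm⟩ : ∃ m : ℤ, ⌊p⌋ - ⌊q⌋ = n * m := by
      have h0 : ((⌊p⌋ - ⌊q⌋ : ℤ) : ZMod n) = 0 := by
        push_cast
        rw [← hi, ← hj, hij]
        ring
      exact (ZMod.intCast_zmod_eq_zero_iff_dvd _ n).mp h0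
    have hmR : ((⌊p⌋ : ℤ) : ℝ) - ((⌊q⌋ : ℤ) : ℝ) = (n : ℝ) * m := by exact_mod_cast hm
    have hcd : cdist n p q = |s - t| := by
      rcases le_total t s with hts | hts
      · have h1 : cdist n p q = min (s - t) ((n:ℝ) - (s - t)) := by
          apply cdist_eq n hn1 p q (s - t) (by linarith) (by linarith)
          exact ⟨m, by linarith⟩
        rw [h1, min_eq_left (by linarith), abs_of_nonneg (by linarith)]
      · have h1 : cdist n p q = min (s - t + n) ((n:ℝ) - (s - t + n)) := by
          apply cdist_eq n hn1 p q (s - t + n) (by linarith) (by linarith)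
          exact ⟨m - 1, by push_cast; linarith⟩
        rw [h1, min_eq_right (by linarith), abs_of_nonpos (by linarith)]
        ring
    rw [hcd]
    have hR : |s - t| ≤ min (min (s + 0 + t) (s + 1 + (1 - t)))
        (min (1 - s + 1 + t) (1 - s + 0 + (1 - t))) := by
      rcases le_total t s with hts | hts
      · rw [abs_of_nonneg (by linarith)]
        exact le_min (le_min (by linarith) (by linarith)) (le_min (by linarith) (by linarith))
      · rw [abs_of_nonpos (by linarith)]
        exact le_min (le_min (by linarith) (by linarith)) (le_min (by linarith) (by linarith))
    exact le_antisymm (le_trans (min_le_right _ _) (min_le_left _ _))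
      (le_min hR (le_min le_rfl hR))
  · -- p and q lie on different edges
    have hij' : i - j ≠ 0 := sub_ne_zero.mpr hij
    have hji' : j - i ≠ 0 := sub_ne_zero.mpr (Ne.symm hij)
    set D1 : ℕ := (i - j).val with hD1def
    set D2 : ℕ := (j - i).val with hD2def
    have hD1 : 1 ≤ D1 := zmod_val_pos hij'
    have hD2 : 1 ≤ D2 := zmod_val_pos hji'
    have hDn : D1 + D2 = n := by
      have h := zmod_val_add_neg hij'
      rwa [neg_sub] at h
    have hD1R : (1:ℝ) ≤ (D1:ℝ) := by exact_mod_cast hD1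
    have hD2R : (1:ℝ) ≤ (D2:ℝ) := by exact_mod_cast hD2
    have hDnR : (D1:ℝ) + (D2:ℝ) = (n:ℝ) := by exact_mod_cast hDn
    set e : ℝ := (D1:ℝ) + s - t with he
    have he0 : 0 ≤ e := by rw [he]; linarith
    have hen : e ≤ n := by rw [he]; linarith
    -- congruence
    obtain ⟨m, hm⟩ : ∃ m : ℤ, (⌊p⌋ - ⌊q⌋ : ℤ) = (D1 : ℤ) + n * m := by
      have hcast : ((⌊p⌋ - ⌊q⌋ : ℤ) : ZMod n) = i - j := by
        push_cast
        rw [← hi, ← hj]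
      have hval : (((⌊p⌋ - ⌊q⌋ : ℤ) : ZMod n).val : ℤ) = (⌊p⌋ - ⌊q⌋) % n :=
        ZMod.val_intCast _
      rw [hcast] at hval
      rw [← hD1def] at hval
      exact ⟨(⌊p⌋ - ⌊q⌋) / n, by rw [hval]; exact (Int.emod_add_mul_ediv _ _).symm⟩
    have hcd : cdist n p q = min e ((n:ℝ) - e) := by
      apply cdist_eq n hn1 p q e he0 hen
      refine ⟨m, ?_⟩
      have hmR : ((⌊p⌋ : ℤ) : ℝ) - ((⌊q⌋ : ℤ) : ℝ) = (D1 : ℝ) + (n : ℝ) * m := by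
        exact_mod_cast hm
      rw [he]
      linarith
    rw [hcd]
    -- the special cases do not occur
    have hne1 : c i ≠ c j := by
      intro h
      have h1 := hlow i j
      rw [h, SimpleGraph.dist_self] at h1
      have h2 : 1 ≤ min D1 D2 := le_min hD1 hD2
      omega
    have heqiter : ∀ a b : ZMod n, c a = c b → a = b := by
      intro a b hab
      by_contra habne
      have ha' : a - b ≠ 0 := sub_ne_zero.mpr habne
      have hb' : b - a ≠ 0 := sub_ne_zero.mpr (Ne.symm habne)
      have h1 := hlow a b
      rw [hab, SimpleGraph.dist_self] at h1
      have h2 : 1 ≤ min (a-b).val (b-a).val := le_min (zmod_val_pos ha') (zmod_val_pos hb')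
      omega
    have hcond2 : ¬ (c i = c (j+1) ∧ c (i+1) = c j) := by
      rintro ⟨h1, h2⟩
      have h3 : i = j + 1 := heqiter _ _ h1
      have h4 : i + 1 = j := heqiter _ _ h2
      have h5 : (2 : ZMod n) = 0 := by
        have : i = i + 2 := by
          nth_rewrite 1 [h3]
          rw [← h4]
          ring
        linear_combination -this
      have h6 : ((2:ℕ) : ZMod n) = 0 := by exact_mod_cast h5
      have h7 : n ∣ 2 := (ZMod.natCast_eq_zero_iff 2 n).mp h6
      have := Nat.le_of_dvd (by norm_num) h7
      omega
    rw [if_neg (fun h => hne1 h.1), if_neg hcond2, min_self, min_self]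
    -- rewrite the four distances
    have hd11 : (G.dist (c i) (c j) : ℝ) = min ((D1:ℕ) : ℝ) ((D2:ℕ) : ℝ) := hd i j
    have hd44 : (G.dist (c (i+1)) (c (j+1)) : ℝ) = min ((D1:ℕ) : ℝ) ((D2:ℕ) : ℝ) := by
      rw [hd (i+1) (j+1), show i + 1 - (j+1) = i - j by ring, show j + 1 - (i+1) = j - i by ring]
    -- lower bounds
    have hL1 : min e ((n:ℝ) - e) ≤ s + (G.dist (c i) (c j) : ℝ) + t := by
      rw [hd11]
      rcases le_total ((D1:ℕ):ℝ) ((D2:ℕ):ℝ) with h | h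
      · rw [min_eq_left h]
        exact le_trans (min_le_left _ _) (by rw [he]; linarith)
      · rw [min_eq_right h]
        exact le_trans (min_le_right _ _) (by rw [he]; linarith)
    have hL2 : min e ((n:ℝ) - e) ≤ s + (G.dist (c i) (c (j+1)) : ℝ) + (1 - t) := by
      by_cases hcase : j - i + 1 = 0
      · have h5 : i = j + 1 := by linear_combination -hcase
        have hD1one : D1 = 1 := by
          rw [hD1def, show i - j = 1 by linear_combination h5, hone]
        have hcc : c (j + 1) = c i := congrArg c h5.symm
        rw [hcc, SimpleGraph.dist_self]
        refine le_trans (min_le_left _ _) ?_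
        rw [he, hD1one]
        push_cast
        linarith
      · have hval2 : (G.dist (c i) (c (j+1)) : ℝ) = min (((D1 - 1 : ℕ)) : ℝ) (((D2 + 1 : ℕ)) : ℝ) := by
          rw [hd i (j+1), show i - (j+1) = (i - j) - 1 by ring, show (j+1) - i = (j - i) + 1 by ring,
            zmod_val_sub_one hij', zmod_val_add_one hcase]
        rw [hval2]
        have hc1 : ((D1 - 1 : ℕ) : ℝ) = (D1:ℝ) - 1 := by
          push_cast [hD1]
          ring
        have hc2 : ((D2 + 1 : ℕ) : ℝ) = (D2:ℝ) + 1 := by push_cast; ring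
        rcases le_total ((D1 - 1 : ℕ):ℝ) ((D2 + 1:ℕ):ℝ) with h | h
        · rw [min_eq_left h, hc1]
          exact le_trans (min_le_left _ _) (by rw [he]; linarith)
        · rw [min_eq_right h, hc2]
          exact le_trans (min_le_right _ _) (by rw [he]; linarith)
    have hL3 : min e ((n:ℝ) - e) ≤ (1 - s) + (G.dist (c (i+1)) (c j) : ℝ) + t := by
      by_cases hcase : i - j + 1 = 0
      · have h5 : j = i + 1 := by linear_combination -hcase
        have hD2one : D2 = 1 := by
          rw [hD2def, show j - i = 1 by linear_combination h5, hone]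
        have hcc : c (i + 1) = c j := congrArg c h5.symm
        rw [hcc, SimpleGraph.dist_self]
        refine le_trans (min_le_right _ _) ?_
        have : (D2:ℝ) = 1 := by exact_mod_cast hD2one
        rw [he]
        push_cast
        linarith
      · have hval3 : (G.dist (c (i+1)) (c j) : ℝ) = min (((D1 + 1 : ℕ)) : ℝ) (((D2 - 1 : ℕ)) : ℝ) := by
          rw [hd (i+1) j, show (i+1) - j = (i - j) + 1 by ring, show j - (i+1) = (j - i) - 1 by ring,
            zmod_val_add_one hcase, zmod_val_sub_one hji']
        rw [hval3]
        have hc1 : ((D1 + 1 : ℕ) : ℝ) = (D1:ℝ) + 1 := by push_cast; ring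
        have hc2 : ((D2 - 1 : ℕ) : ℝ) = (D2:ℝ) - 1 := by
          push_cast [hD2]
          ring
        rcases le_total ((D1 + 1 : ℕ):ℝ) ((D2 - 1:ℕ):ℝ) with h | h
        · rw [min_eq_left h, hc1]
          exact le_trans (min_le_left _ _) (by rw [he]; linarith)
        · rw [min_eq_right h, hc2]
          exact le_trans (min_le_right _ _) (by rw [he]; linarith)
    have hL4 : min e ((n:ℝ) - e) ≤ (1 - s) + (G.dist (c (i+1)) (c (j+1)) : ℝ) + (1 - t) := by
      rw [hd44]
      rcases le_total ((D1:ℕ):ℝ) ((D2:ℕ):ℝ) with h | h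
      · rw [min_eq_left h]
        exact le_trans (min_le_left _ _) (by rw [he]; linarith)
      · rw [min_eq_right h]
        exact le_trans (min_le_right _ _) (by rw [he]; linarith)
    -- upper bounds
    have hU2 : s + (G.dist (c i) (c (j+1)) : ℝ) + (1 - t) ≤ e := by
      have hb : G.dist (c i) (c (j+1)) ≤ D1 - 1 := by
        refine le_trans (dist_le_min_val hc i (j+1)) ?_
        rw [show i - (j+1) = (i - j) - 1 by ring, zmod_val_sub_one hij']
        exact min_le_left _ _
      have hbR : (G.dist (c i) (c (j+1)) : ℝ) ≤ (D1:ℝ) - 1 := by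
        have h1 : (G.dist (c i) (c (j+1)) : ℝ) ≤ ((D1 - 1 : ℕ) : ℝ) := by exact_mod_cast hb
        refine le_trans h1 ?_
        push_cast [hD1]
        ring_nf
        exact le_rfl
      rw [he]
      linarith
    have hU3 : (1 - s) + (G.dist (c (i+1)) (c j) : ℝ) + t ≤ (n:ℝ) - e := by
      have hb : G.dist (c (i+1)) (c j) ≤ D2 - 1 := by
        refine le_trans (dist_le_min_val hc (i+1) j) ?_
        rw [show j - (i+1) = (j - i) - 1 by ring, zmod_val_sub_one hji']
        exact min_le_right _ _
      have hbR : (G.dist (c (i+1)) (c j) : ℝ) ≤ (D2:ℝ) - 1 := by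
        have h1 : (G.dist (c (i+1)) (c j) : ℝ) ≤ ((D2 - 1 : ℕ) : ℝ) := by exact_mod_cast hb
        refine le_trans h1 ?_
        push_cast [hD2]
        ring_nf
        exact le_rfl
      rw [he]
      linarith
    apply le_antisymm
    · apply le_min
      · exact le_trans (le_trans (min_le_left _ _) (min_le_right _ _)) hU2
      · exact le_trans (le_trans (min_le_right _ _) (min_le_left _ _)) hU3
    · exact le_min (le_min hL1 hL2) (le_min hL3 hL4)


lemma exists_shortcut {G : SimpleGraph V} {n : ℕ} (θ : ℕ)
    (hθ : ∀ (k : ℕ) (c : ZMod k → V), 0 < k → IsCycle G k c → IsIsometricCycle G k c → k ≤ θ)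
    {c : ZMod n → V} (hc : IsCycle G n c) (hbig : max θ 2 < n) :
    ∃ i j : ZMod n, G.dist (c i) (c j) < min (i - j).val (j - i).val := by
  haveI : NeZero n := ⟨by omega⟩
  by_contra hcon
  push_neg at hcon
  have hiso : IsIsometricCycle G n c :=
    isometric_of_no_shortcut (by omega) hc hcon
  have := hθ n c (by omega) hc hiso
  omega

section Presentation

variable {Gp : Type} [Group Gp] {V : Type} (G : SimpleGraph V) (ρ : Gp →* Equiv.Perm V)
  (v0 : V) (σ : V → Gp) (R : ℕ)

def Sset : Set Gp := {g : Gp | G.dist v0 (ρ g v0) ≤ R}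

lemma one_mem_Sset : (1 : Gp) ∈ Sset G ρ v0 R := by
  simp [Sset, SimpleGraph.dist_self]

def letter (u v : V) : ↥(Sset G ρ v0 R) :=
  if h : (σ u)⁻¹ * σ v ∈ Sset G ρ v0 R then ⟨_, h⟩ else ⟨1, one_mem_Sset G ρ v0 R⟩

def pword (m : ℕ) (f : ℕ → V) : FreeGroup ↥(Sset G ρ v0 R) :=
  ((List.range m).map (fun k => FreeGroup.of (letter G ρ v0 σ R (f k) (f (k+1))))).prod

def piS : FreeGroup ↥(Sset G ρ v0 R) →* Gp := FreeGroup.lift (fun s => (s : Gp))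

@[simp] lemma piS_of (s : ↥(Sset G ρ v0 R)) : piS G ρ v0 R (FreeGroup.of s) = (s : Gp) :=
  FreeGroup.lift_apply_of

def Bnd (m : ℕ) (w : FreeGroup ↥(Sset G ρ v0 R)) : Prop :=
  ∃ l : List (↥(Sset G ρ v0 R) × Bool), FreeGroup.mk l = w ∧ l.length ≤ m

def Rels (L : ℕ) : Set (FreeGroup ↥(Sset G ρ v0 R)) :=
  {w | piS G ρ v0 R w = 1 ∧ Bnd G ρ v0 R L w}

def NN (L : ℕ) : Subgroup (FreeGroup ↥(Sset G ρ v0 R)) :=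
  Subgroup.normalClosure (Rels G ρ v0 R L)

instance (L : ℕ) : (NN G ρ v0 R L).Normal := Subgroup.normalClosure_normal

-- Bnd lemmas
lemma Bnd.one (m : ℕ) : Bnd G ρ v0 R m 1 :=
  ⟨[], rfl, by simp⟩

lemma Bnd.of (m : ℕ) (hm : 1 ≤ m) (s : ↥(Sset G ρ v0 R)) : Bnd G ρ v0 R m (FreeGroup.of s) :=
  ⟨[(s, true)], rfl, by simpa⟩

lemma Bnd.inv_of (m : ℕ) (hm : 1 ≤ m) (s : ↥(Sset G ρ v0 R)) :
    Bnd G ρ v0 R m (FreeGroup.of s)⁻¹ :=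
  ⟨[(s, false)], by
    rw [show [(s, false)] = FreeGroup.invRev [(s, true)] from by simp [FreeGroup.invRev],
      ← FreeGroup.inv_mk]
    rfl, by simpa⟩

lemma Bnd.mul {m₁ m₂ : ℕ} {w₁ w₂ : FreeGroup ↥(Sset G ρ v0 R)}
    (h₁ : Bnd G ρ v0 R m₁ w₁) (h₂ : Bnd G ρ v0 R m₂ w₂) :
    Bnd G ρ v0 R (m₁ + m₂) (w₁ * w₂) := by
  obtain ⟨l₁, hl₁, hb₁⟩ := h₁
  obtain ⟨l₂, hl₂, hb₂⟩ := h₂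
  exact ⟨l₁ ++ l₂, by rw [← FreeGroup.mul_mk, hl₁, hl₂], by simp; omega⟩

lemma Bnd.mono {m₁ m₂ : ℕ} (h : m₁ ≤ m₂) {w : FreeGroup ↥(Sset G ρ v0 R)}
    (hw : Bnd G ρ v0 R m₁ w) : Bnd G ρ v0 R m₂ w := by
  obtain ⟨l, hl, hb⟩ := hw
  exact ⟨l, hl, hb.trans h⟩

-- pword lemmas
lemma pword_zero (f : ℕ → V) : pword G ρ v0 σ R 0 f = 1 := by simp [pword]

lemma pword_succ (m : ℕ) (f : ℕ → V) :
    pword G ρ v0 σ R (m+1) f =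
      pword G ρ v0 σ R m f * FreeGroup.of (letter G ρ v0 σ R (f m) (f (m+1))) := by
  simp [pword, List.range_succ]

lemma pword_cons (m : ℕ) (f : ℕ → V) :
    pword G ρ v0 σ R (m+1) f =
      FreeGroup.of (letter G ρ v0 σ R (f 0) (f 1)) * pword G ρ v0 σ R m (fun k => f (k+1)) := by
  simp only [pword, List.range_succ_eq_map, List.map_cons, List.map_map, List.prod_cons]
  congr 1

lemma pword_congr (m : ℕ) (f g : ℕ → V) (h : ∀ k, k ≤ m → f k = g k) :
    pword G ρ v0 σ R m f = pword G ρ v0 σ R m g := by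
  unfold pword
  congr 1
  apply List.map_congr_left
  intro k hk
  rw [List.mem_range] at hk
  rw [h k (by omega), h (k+1) (by omega)]

lemma pword_add (a b : ℕ) (f : ℕ → V) :
    pword G ρ v0 σ R (a + b) f =
      pword G ρ v0 σ R a f * pword G ρ v0 σ R b (fun k => f (a + k)) := by
  induction b with
  | zero => simp [pword_zero]
  | succ b ih =>
      rw [show a + (b+1) = (a+b)+1 by omega, pword_succ, ih, pword_succ, mul_assoc,
        show a + b + 1 = a + (b+1) by omega]

lemma Bnd_pword (m : ℕ) (f : ℕ → V) : Bnd G ρ v0 R m (pword G ρ v0 σ R m f) := by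
  induction m with
  | zero => rw [pword_zero]; exact Bnd.one G ρ v0 R 0
  | succ m ih =>
      rw [pword_succ]
      exact Bnd.mul G ρ v0 R ih (Bnd.of G ρ v0 R 1 le_rfl _)

def IsChain (f : ℕ → V) (m : ℕ) : Prop := ∀ k, k < m → G.Adj (f k) (f (k+1))


variable {G ρ v0 σ R}

lemma dist_rho (hconn : G.Connected)
    (hact : ∀ (g : Gp) (u v : V), G.Adj (ρ g u) (ρ g v) ↔ G.Adj u v)
    (g : Gp) (u v : V) : G.dist (ρ g u) (ρ g v) = G.dist u v := by
  have key : ∀ (g : Gp) (u v : V), G.dist (ρ g u) (ρ g v) ≤ G.dist u v := by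
    intro g u v
    obtain ⟨w, hw⟩ := hconn.exists_walk_length_eq_dist u v
    have hmap : ∀ {a b : V}, G.Adj a b → G.Adj (ρ g a) (ρ g b) := by
      intro a b hab
      exact (hact g a b).mpr hab
    let f : G →g G := ⟨fun x => ρ g x, hmap⟩
    have h := SimpleGraph.dist_le (w.map f)
    rwa [SimpleGraph.Walk.length_map, hw] at h
  apply le_antisymm (key g u v)
  have h2 := key g⁻¹ (ρ g u) (ρ g v)
  rwa [show ρ g⁻¹ (ρ g u) = u by simp, show ρ g⁻¹ (ρ g v) = v by simp] at h2

variable (D : ℕ)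

lemma letter_spec (hconn : G.Connected)
    (hact : ∀ (g : Gp) (u v : V), G.Adj (ρ g u) (ρ g v) ↔ G.Adj u v)
    (hσ : ∀ v : V, G.dist (ρ (σ v) v0) v ≤ D) (hDR : 2*D+1 ≤ R)
    {u v : V} (hadj : G.Adj u v) :
    (letter G ρ v0 σ R u v : Gp) = (σ u)⁻¹ * σ v := by
  have hmem : (σ u)⁻¹ * σ v ∈ Sset G ρ v0 R := by
    show G.dist v0 (ρ ((σ u)⁻¹ * σ v) v0) ≤ R
    have h1 : ρ ((σ u)⁻¹ * σ v) v0 = ρ (σ u)⁻¹ (ρ (σ v) v0) := by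
      rw [map_mul]
      rfl
    rw [h1]
    have h2 : G.dist v0 (ρ (σ u)⁻¹ (ρ (σ v) v0)) = G.dist (ρ (σ u) v0) (ρ (σ v) v0) := by
      have h3 := dist_rho hconn hact (σ u) v0 (ρ (σ u)⁻¹ (ρ (σ v) v0))
      rw [show ρ (σ u) (ρ (σ u)⁻¹ (ρ (σ v) v0)) = ρ (σ v) v0 by simp] at h3
      exact h3.symm
    rw [h2]
    have t1 : G.dist (ρ (σ u) v0) (ρ (σ v) v0) ≤
        G.dist (ρ (σ u) v0) u + G.dist u (ρ (σ v) v0) := hconn.dist_triangle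
    have t2 : G.dist u (ρ (σ v) v0) ≤ G.dist u v + G.dist v (ρ (σ v) v0) := hconn.dist_triangle
    have h4 : G.dist u v = 1 := SimpleGraph.dist_eq_one_iff_adj.mpr hadj
    have h5 := hσ u
    have h6 := hσ v
    rw [SimpleGraph.dist_comm] at h6
    omega
  rw [letter, dif_pos hmem]

lemma piS_pword (hconn : G.Connected)
    (hact : ∀ (g : Gp) (u v : V), G.Adj (ρ g u) (ρ g v) ↔ G.Adj u v)
    (hσ : ∀ v : V, G.dist (ρ (σ v) v0) v ≤ D) (hDR : 2*D+1 ≤ R)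
    (m : ℕ) (f : ℕ → V) (hchain : IsChain G f m) :
    piS G ρ v0 R (pword G ρ v0 σ R m f) = (σ (f 0))⁻¹ * σ (f m) := by
  induction m with
  | zero => rw [pword_zero, map_one]; group
  | succ m ih =>
      rw [pword_succ, map_mul, ih (fun k hk => hchain k (by omega)), piS_of,
        letter_spec D hconn hact hσ hDR (hchain m (by omega))]
      group

variable (L : ℕ)

lemma pword_mem_rels (hconn : G.Connected)
    (hact : ∀ (g : Gp) (u v : V), G.Adj (ρ g u) (ρ g v) ↔ G.Adj u v)
    (hσ : ∀ v : V, G.dist (ρ (σ v) v0) v ≤ D) (hDR : 2*D+1 ≤ R)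
    (m : ℕ) (f : ℕ → V) (hchain : IsChain G f m) (hclosed : f m = f 0) (hm : m ≤ L) :
    pword G ρ v0 σ R m f ∈ Rels G ρ v0 R L := by
  constructor
  · rw [piS_pword D hconn hact hσ hDR m f hchain, hclosed]
    group
  · exact Bnd.mono G ρ v0 R hm (Bnd_pword G ρ v0 σ R m f)

lemma letter_rel_mem (hconn : G.Connected)
    (hact : ∀ (g : Gp) (u v : V), G.Adj (ρ g u) (ρ g v) ↔ G.Adj u v)
    (hσ : ∀ v : V, G.dist (ρ (σ v) v0) v ≤ D) (hDR : 2*D+1 ≤ R) (hL : 2 ≤ L)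
    {u v : V} (hadj : G.Adj u v) :
    FreeGroup.of (letter G ρ v0 σ R u v) * FreeGroup.of (letter G ρ v0 σ R v u)
      ∈ Rels G ρ v0 R L := by
  constructor
  · rw [map_mul, piS_of, piS_of, letter_spec D hconn hact hσ hDR hadj,
      letter_spec D hconn hact hσ hDR hadj.symm]
    group
  · exact Bnd.mono G ρ v0 R hL
      (Bnd.mul G ρ v0 R (Bnd.of G ρ v0 R 1 le_rfl _) (Bnd.of G ρ v0 R 1 le_rfl _))

lemma phi_letter_inv (hconn : G.Connected)
    (hact : ∀ (g : Gp) (u v : V), G.Adj (ρ g u) (ρ g v) ↔ G.Adj u v)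
    (hσ : ∀ v : V, G.dist (ρ (σ v) v0) v ≤ D) (hDR : 2*D+1 ≤ R) (hL : 2 ≤ L)
    {u v : V} (hadj : G.Adj u v) :
    QuotientGroup.mk' (NN G ρ v0 R L) (FreeGroup.of (letter G ρ v0 σ R v u)) =
      (QuotientGroup.mk' (NN G ρ v0 R L) (FreeGroup.of (letter G ρ v0 σ R u v)))⁻¹ := by
  have h1 : FreeGroup.of (letter G ρ v0 σ R u v) * FreeGroup.of (letter G ρ v0 σ R v u)
      ∈ NN G ρ v0 R L :=
    Subgroup.subset_normalClosure (letter_rel_mem D L hconn hact hσ hDR hL hadj)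
  have h2 := (QuotientGroup.eq_one_iff _).mpr h1
  have h3 : QuotientGroup.mk' (NN G ρ v0 R L) (FreeGroup.of (letter G ρ v0 σ R u v)) *
      QuotientGroup.mk' (NN G ρ v0 R L) (FreeGroup.of (letter G ρ v0 σ R v u)) = 1 := by
    rw [← map_mul]
    exact h2
  exact eq_inv_of_mul_eq_one_right h3

lemma phi_pword_rev (hconn : G.Connected)
    (hact : ∀ (g : Gp) (u v : V), G.Adj (ρ g u) (ρ g v) ↔ G.Adj u v)
    (hσ : ∀ v : V, G.dist (ρ (σ v) v0) v ≤ D) (hDR : 2*D+1 ≤ R) (hL : 2 ≤ L)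
    (m : ℕ) (f : ℕ → V) (hchain : IsChain G f m) :
    QuotientGroup.mk' (NN G ρ v0 R L) (pword G ρ v0 σ R m (fun k => f (m - k))) *
      QuotientGroup.mk' (NN G ρ v0 R L) (pword G ρ v0 σ R m f) = 1 := by
  induction m with
  | zero => rw [pword_zero, pword_zero, map_one, one_mul]
  | succ m ih =>
      have hstep : pword G ρ v0 σ R (m+1) (fun k => f (m + 1 - k)) =
          FreeGroup.of (letter G ρ v0 σ R (f (m+1)) (f m)) *
            pword G ρ v0 σ R m (fun k => f (m - k)) := by
        rw [pword_cons]
        congr 1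
        apply pword_congr
        intro k hk
        congr 1
        omega
      rw [hstep, pword_succ, map_mul, map_mul,
        phi_letter_inv D L hconn hact hσ hDR hL (hchain m (by omega))]
      have h1 := ih (fun k hk => hchain k (by omega))
      set x := QuotientGroup.mk' (NN G ρ v0 R L) (pword G ρ v0 σ R m (fun k => f (m - k)))
      set y := QuotientGroup.mk' (NN G ρ v0 R L) (pword G ρ v0 σ R m f)
      set l := QuotientGroup.mk' (NN G ρ v0 R L) (FreeGroup.of (letter G ρ v0 σ R (f m) (f (m+1))))
      rw [show l⁻¹ * x * (y * l) = l⁻¹ * (x * y) * l by group, h1]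
      group


lemma key_step (hconn : G.Connected)
    (hact : ∀ (g : Gp) (u v : V), G.Adj (ρ g u) (ρ g v) ↔ G.Adj u v)
    (hσ : ∀ v : V, G.dist (ρ (σ v) v0) v ≤ D) (hDR : 2*D+1 ≤ R) (hL2 : 2 ≤ L)
    (m : ℕ) (f : ℕ → V) (hchain : IsChain G f m) (hclosed : f m = f 0)
    (p q : ℕ) (hpq : p < q) (hq : q < m)
    (hE : G.dist (f p) (f q) < min (q - p) (m - (q - p)))
    (ih : ∀ m', m' < m → ∀ f', IsChain G f' m' → f' m' = f' 0 →
      QuotientGroup.mk' (NN G ρ v0 R L) (pword G ρ v0 σ R m' f') = 1) :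
    QuotientGroup.mk' (NN G ρ v0 R L) (pword G ρ v0 σ R m f) = 1 := by
  obtain ⟨w, hw⟩ := hconn.exists_walk_length_eq_dist (f p) (f q)
  set E := G.dist (f p) (f q) with hEdef
  set d := q - p with hddef
  have hd1 : 1 ≤ d := by omega
  have hEd : E < d := lt_of_lt_of_le hE (min_le_left _ _)
  have hEmd : E < m - d := lt_of_lt_of_le hE (min_le_right _ _)
  have hwchain : IsChain G (fun k => w.getVert k) E :=
    fun k hk => w.adj_getVert_succ (by omega)
  have hgetE : w.getVert E = f q := by rw [← hw]; exact w.getVert_length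
  have hget0 : w.getVert 0 = f p := w.getVert_zero
  have hrevget : ∀ k : ℕ, w.reverse.getVert k = w.getVert (E - k) := by
    intro k
    rw [SimpleGraph.Walk.getVert_reverse, hw]
  -- the two new closed walks
  set f₁ : ℕ → V := fun k => if k ≤ d then f (p + k) else w.reverse.getVert (k - d) with hf₁
  set f₂ : ℕ → V := fun k => if k ≤ E then w.getVert k
    else (if k - E ≤ m - q then f (q + (k - E)) else f (k - E - (m - q))) with hf₂
  have chain₁ : IsChain G f₁ (d + E) := by
    intro k hk
    by_cases h1 : k + 1 ≤ d
    · have e1 : f₁ k = f (p + k) := by rw [hf₁]; exact if_pos (by omega)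
      have e2 : f₁ (k+1) = f (p + k + 1) := by
        rw [hf₁]
        simp only
        rw [if_pos h1, show p + (k+1) = p + k + 1 by omega]
      rw [e1, e2]
      exact hchain (p+k) (by omega)
    · by_cases h2 : k ≤ d
      · have hkd : k = d := by omega
        have hE0 : 0 < E := by omega
        have e1 : f₁ k = f q := by
          rw [hf₁]
          simp only
          rw [if_pos h2, hkd, show p + d = q by omega]
        have e2 : f₁ (k+1) = w.reverse.getVert 1 := by
          rw [hf₁]
          simp only
          rw [if_neg (by omega), show k + 1 - d = 1 by omega]
        rw [e1, e2, hrevget 1]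
        have h3 := w.adj_getVert_succ (i := E - 1) (by omega)
        rw [show E - 1 + 1 = E by omega, hgetE] at h3
        exact h3.symm
      · have e1 : f₁ k = w.reverse.getVert (k - d) := by rw [hf₁]; exact if_neg h2
        have e2 : f₁ (k+1) = w.reverse.getVert ((k - d) + 1) := by
          rw [hf₁]
          simp only
          rw [if_neg (by omega), show k + 1 - d = (k - d) + 1 by omega]
        rw [e1, e2]
        exact w.reverse.adj_getVert_succ (by rw [SimpleGraph.Walk.length_reverse, hw]; omega)
  have closed₁ : f₁ (d + E) = f₁ 0 := by
    have e0 : f₁ 0 = f p := by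
      rw [hf₁]
      simp only
      rw [if_pos (by omega), show p + 0 = p by omega]
    by_cases hE0 : E = 0
    · have hfpq : f p = f q := (hconn.dist_eq_zero_iff).mp (by omega)
      have : f₁ (d + E) = f q := by
        rw [hf₁]
        simp only
        rw [if_pos (by omega), show p + (d + E) = q by omega]
      rw [this, e0, hfpq]
    · have : f₁ (d + E) = w.getVert 0 := by
        rw [hf₁]
        simp only
        rw [if_neg (by omega), show d + E - d = E by omega, hrevget,
          show E - E = 0 by omega]
      rw [this, hget0, e0]
  have chain₂ : IsChain G f₂ (E + (m - d)) := by
    intro k hk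
    by_cases h1 : k + 1 ≤ E
    · have e1 : f₂ k = w.getVert k := by rw [hf₂]; exact if_pos (by omega)
      have e2 : f₂ (k+1) = w.getVert (k+1) := by rw [hf₂]; exact if_pos h1
      rw [e1, e2]
      exact w.adj_getVert_succ (by omega)
    · by_cases h2 : k ≤ E
      · have hkE : k = E := by omega
        have e1 : f₂ k = f q := by
          rw [hf₂]
          simp only
          rw [if_pos h2, hkE, hgetE]
        have e2 : f₂ (k+1) = f (q + 1) := by
          rw [hf₂]
          simp only
          rw [if_neg (by omega), if_pos (by omega : k + 1 - E ≤ m - q),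
            show q + (k + 1 - E) = q + 1 by omega]
        rw [e1, e2]
        exact hchain q (by omega)
      · by_cases h3 : k + 1 - E ≤ m - q
        · have e1 : f₂ k = f (q + (k - E)) := by
            rw [hf₂]
            simp only
            rw [if_neg h2, if_pos (by omega)]
          have e2 : f₂ (k+1) = f (q + (k - E) + 1) := by
            rw [hf₂]
            simp only
            rw [if_neg (by omega), if_pos h3, show q + (k + 1 - E) = q + (k - E) + 1 by omega]
          rw [e1, e2]
          exact hchain (q + (k - E)) (by omega)
        · by_cases h4 : k - E ≤ m - q
          · have hkEq : k - E = m - q := by omega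
            have e1 : f₂ k = f 0 := by
              rw [hf₂]
              simp only
              rw [if_neg h2, if_pos h4, hkEq, show q + (m - q) = m by omega, hclosed]
            have e2 : f₂ (k+1) = f 1 := by
              rw [hf₂]
              simp only
              rw [if_neg (by omega), if_neg h3, show k + 1 - E - (m - q) = 1 by omega]
            rw [e1, e2]
            exact hchain 0 (by omega)
          · have e1 : f₂ k = f (k - E - (m - q)) := by
              rw [hf₂]
              simp only
              rw [if_neg h2, if_neg h4]
            have e2 : f₂ (k+1) = f (k - E - (m - q) + 1) := by
              rw [hf₂]
              simp only
              rw [if_neg (by omega), if_neg (by omega),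
                show k + 1 - E - (m - q) = k - E - (m - q) + 1 by omega]
            rw [e1, e2]
            exact hchain (k - E - (m - q)) (by omega)
  have closed₂ : f₂ (E + (m - d)) = f₂ 0 := by
    have e0 : f₂ 0 = f p := by
      rw [hf₂]
      simp only
      rw [if_pos (by omega), hget0]
    by_cases hp0 : p = 0
    · have : f₂ (E + (m - d)) = f 0 := by
        rw [hf₂]
        simp only
        rw [if_neg (by omega), if_pos (by omega),
          show q + (E + (m - d) - E) = m by omega, hclosed]
      rw [this, e0, hp0]
    · have : f₂ (E + (m - d)) = f p := by
        rw [hf₂]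
        simp only
        rw [if_neg (by omega), if_neg (by omega),
          show E + (m - d) - E - (m - q) = p by omega]
      rw [this, e0]
  -- words
  have hgrev : QuotientGroup.mk' (NN G ρ v0 R L) (pword G ρ v0 σ R E (fun k => w.reverse.getVert k)) =
      (QuotientGroup.mk' (NN G ρ v0 R L) (pword G ρ v0 σ R E (fun k => w.getVert k)))⁻¹ := by
    have hprod := phi_pword_rev D L hconn hact hσ hDR hL2 E (fun k => w.getVert k) hwchain
    have hcongr : pword G ρ v0 σ R E (fun k => w.getVert (E - k)) =
        pword G ρ v0 σ R E (fun k => w.reverse.getVert k) :=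
      pword_congr G ρ v0 σ R E _ _ (fun k hk => (hrevget k).symm)
    rw [hcongr] at hprod
    exact eq_inv_of_mul_eq_one_left hprod
  have hA1 := ih (d + E) (by omega) f₁ chain₁ closed₁
  have hsplit1 : pword G ρ v0 σ R (d + E) f₁ =
      pword G ρ v0 σ R d (fun k => f (p + k)) *
        pword G ρ v0 σ R E (fun k => w.reverse.getVert k) := by
    rw [pword_add]
    congr 1
    · refine pword_congr G ρ v0 σ R d _ _ (fun k hk => ?_)
      rw [hf₁]
      simp only
      rw [if_pos hk]
    · refine pword_congr G ρ v0 σ R E _ _ (fun k hk => ?_)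
      rw [hf₁]
      simp only
      by_cases hk0 : k = 0
      · rw [hk0, if_pos (by omega), show p + (d + 0) = q by omega, hrevget,
          show E - 0 = E by omega, hgetE]
      · rw [if_neg (by omega), show d + k - d = k by omega]
  have hA : QuotientGroup.mk' (NN G ρ v0 R L) (pword G ρ v0 σ R d (fun k => f (p + k))) =
      QuotientGroup.mk' (NN G ρ v0 R L) (pword G ρ v0 σ R E (fun k => w.getVert k)) := by
    rw [hsplit1, map_mul, hgrev] at hA1
    exact mul_inv_eq_one.mp hA1
  have hA2 := ih (E + (m - d)) (by omega) f₂ chain₂ closed₂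
  have hsplit2 : pword G ρ v0 σ R (E + (m - d)) f₂ =
      pword G ρ v0 σ R E (fun k => w.getVert k) *
        (pword G ρ v0 σ R (m - q) (fun k => f (q + k)) * pword G ρ v0 σ R p f) := by
    rw [pword_add]
    congr 1
    · refine pword_congr G ρ v0 σ R E _ _ (fun k hk => ?_)
      rw [hf₂]
      simp only
      rw [if_pos hk]
    · have h5 := pword_add G ρ v0 σ R (m - q) p (fun k => f₂ (E + k))
      rw [show (m - q) + p = m - d by omega] at h5
      rw [h5]
      congr 1
      · refine pword_congr G ρ v0 σ R (m - q) _ _ (fun k hk => ?_)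
        rw [hf₂]
        simp only
        by_cases hk0 : k = 0
        · rw [hk0, if_pos (by omega), show E + 0 = E by omega, hgetE,
            show q + 0 = q by omega]
        · rw [if_neg (by omega), if_pos (by omega), show E + k - E = k by omega]
      · refine pword_congr G ρ v0 σ R p _ _ (fun k hk => ?_)
        rw [hf₂]
        simp only
        by_cases hk0 : k = 0
        · rw [hk0, if_neg (by omega), if_pos (by omega),
            show q + (E + (m - q + 0) - E) = m by omega, hclosed]
        · rw [if_neg (by omega), if_neg (by omega),
            show E + (m - q + k) - E - (m - q) = k by omega]
  have hYX : QuotientGroup.mk' (NN G ρ v0 R L) (pword G ρ v0 σ R E (fun k => w.getVert k)) *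
      (QuotientGroup.mk' (NN G ρ v0 R L) (pword G ρ v0 σ R (m - q) (fun k => f (q + k))) *
        QuotientGroup.mk' (NN G ρ v0 R L) (pword G ρ v0 σ R p f)) = 1 := by
    rw [hsplit2, map_mul, map_mul] at hA2
    exact hA2
  have e1 : pword G ρ v0 σ R m f =
      pword G ρ v0 σ R q f * pword G ρ v0 σ R (m - q) (fun k => f (q + k)) := by
    have h := pword_add G ρ v0 σ R q (m - q) f
    rw [show q + (m - q) = m by omega] at h
    exact h
  have e2 : pword G ρ v0 σ R q f =
      pword G ρ v0 σ R p f * pword G ρ v0 σ R d (fun k => f (p + k)) := by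
    have h := pword_add G ρ v0 σ R p d f
    rw [show p + d = q by omega] at h
    exact h
  rw [e1, e2, map_mul, map_mul, hA]
  set x := QuotientGroup.mk' (NN G ρ v0 R L) (pword G ρ v0 σ R p f)
  set y := QuotientGroup.mk' (NN G ρ v0 R L) (pword G ρ v0 σ R (m - q) (fun k => f (q + k)))
  set g := QuotientGroup.mk' (NN G ρ v0 R L) (pword G ρ v0 σ R E (fun k => w.getVert k))
  have hg : g = (y * x)⁻¹ := eq_inv_of_mul_eq_one_left hYX
  rw [hg]
  group


lemma phi_pword_closed (hconn : G.Connected)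
    (hact : ∀ (g : Gp) (u v : V), G.Adj (ρ g u) (ρ g v) ↔ G.Adj u v)
    (hσ : ∀ v : V, G.dist (ρ (σ v) v0) v ≤ D) (hDR : 2*D+1 ≤ R)
    (θ : ℕ)
    (hθ : ∀ (k : ℕ) (c : ZMod k → V), 0 < k → IsCycle G k c → IsIsometricCycle G k c → k ≤ θ)
    (hLθ : θ + 2 ≤ L) (m : ℕ) :
    ∀ f : ℕ → V, IsChain G f m → f m = f 0 →
      QuotientGroup.mk' (NN G ρ v0 R L) (pword G ρ v0 σ R m f) = 1 := by
  have hL2 : 2 ≤ L := by omega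
  induction m using Nat.strong_induction_on with
  | _ m ih =>
    intro f hchain hclosed
    by_cases hm : m ≤ L
    · have := (QuotientGroup.eq_one_iff _).mpr
        (Subgroup.subset_normalClosure
          (pword_mem_rels D L hconn hact hσ hDR m f hchain hclosed hm))
      exact this
    · haveI : NeZero m := ⟨by omega⟩
      set c : ZMod m → V := fun k => f k.val with hcdef
      have hcyc : IsCycle G m c := by
        intro i
        have hival : i.val < m := ZMod.val_lt i
        by_cases hlast : i.val + 1 = m
        · have h1 : (i + 1).val = 0 := by
            have h2 : i + 1 = 0 := by
              have : ((i.val + 1 : ℕ) : ZMod m) = i + 1 := by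
                push_cast
                rw [zmod_cast_val]
              rw [← this, hlast, ZMod.natCast_self]
            rw [h2, ZMod.val_zero]
          show G.Adj (f i.val) (f (i+1).val)
          rw [h1]
          have h3 := hchain i.val (by omega)
          rwa [hlast, hclosed] at h3
        · have h1 : (i + 1).val = i.val + 1 := by
            have h2 : i + 1 ≠ 0 := by
              intro h0
              have : ((i.val + 1 : ℕ) : ZMod m) = 0 := by
                push_cast
                rw [zmod_cast_val]
                exact h0
              have := (ZMod.natCast_eq_zero_iff _ m).mp this
              have := Nat.le_of_dvd (by omega) this
              omega
            exact zmod_val_add_one h2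
          show G.Adj (f i.val) (f (i+1).val)
          rw [h1]
          exact hchain i.val (by omega)
      obtain ⟨i, j, hsh⟩ := exists_shortcut θ hθ hcyc (by omega)
      have hvv : ∀ a b : ZMod m, a.val < b.val →
          (b - a).val = b.val - a.val ∧ (a - b).val = m - (b.val - a.val) := by
        intro a b hab
        have h1 : (b - a).val = b.val - a.val := by
          have hba : b - a = ((b.val - a.val : ℕ) : ZMod m) := by
            push_cast [Nat.cast_sub hab.le]
            rw [zmod_cast_val, zmod_cast_val]
          rw [hba, ZMod.val_cast_of_lt (by have := ZMod.val_lt b; omega)]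
        have hne : b - a ≠ 0 := by
          intro h0
          rw [h0, ZMod.val_zero] at h1
          omega
        have h2 : (a - b).val = m - (b.val - a.val) := by
          have hneg : a - b = -(b - a) := by ring
          rw [hneg, ZMod.neg_val, if_neg hne, h1]
        exact ⟨h1, h2⟩
      rcases lt_trichotomy i.val j.val with hlt | heq | hgt
      · obtain ⟨h1, h2⟩ := hvv i j hlt
        have hE : G.dist (f i.val) (f j.val) <
            min (j.val - i.val) (m - (j.val - i.val)) := by
          have : G.dist (c i) (c j) < min (i - j).val (j - i).val := hsh
          rw [h1, h2, min_comm] at this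
          exact this
        exact key_step D L hconn hact hσ hDR hL2 m f hchain hclosed i.val j.val hlt
          (ZMod.val_lt j) hE (fun m' hm' f' hc' hcl' => ih m' hm' f' hc' hcl')
      · exfalso
        have hijeq : i = j := ZMod.val_injective m heq
        rw [hijeq, sub_self, ZMod.val_zero] at hsh
        simp at hsh
      · obtain ⟨h1, h2⟩ := hvv j i hgt
        have hE : G.dist (f j.val) (f i.val) <
            min (i.val - j.val) (m - (i.val - j.val)) := by
          have h3 : G.dist (c j) (c i) < min (i - j).val (j - i).val := by
            rw [SimpleGraph.dist_comm] at hsh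
            exact hsh
          rw [h1, h2] at h3
          exact h3
        exact key_step D L hconn hact hσ hDR hL2 m f hchain hclosed j.val i.val hgt
          (ZMod.val_lt i) hE (fun m' hm' f' hc' hcl' => ih m' hm' f' hc' hcl')


-- ### from words in the group to walks in the graph

lemma corr_mem (hconn : G.Connected)
    (hact : ∀ (g : Gp) (u v : V), G.Adj (ρ g u) (ρ g v) ↔ G.Adj u v)
    (hσ : ∀ v : V, G.dist (ρ (σ v) v0) v ≤ D) (hDR : 2*D+1 ≤ R) (g : Gp) :
    (σ (ρ g v0))⁻¹ * g ∈ Sset G ρ v0 R := by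
  show G.dist v0 (ρ ((σ (ρ g v0))⁻¹ * g) v0) ≤ R
  set x := ρ g v0 with hx
  have h1 : ρ ((σ x)⁻¹ * g) v0 = ρ (σ x)⁻¹ x := by
    rw [map_mul]
    rfl
  rw [h1]
  have h2 : G.dist v0 (ρ (σ x)⁻¹ x) = G.dist (ρ (σ x) v0) x := by
    have h3 := dist_rho hconn hact (σ x) v0 (ρ (σ x)⁻¹ x)
    rw [show ρ (σ x) (ρ (σ x)⁻¹ x) = x by simp] at h3
    exact h3.symm
  rw [h2]
  have := hσ x
  omega

def corrL (hconn : G.Connected)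
    (hact : ∀ (g : Gp) (u v : V), G.Adj (ρ g u) (ρ g v) ↔ G.Adj u v)
    (hσ : ∀ v : V, G.dist (ρ (σ v) v0) v ≤ D) (hDR : 2*D+1 ≤ R) (g : Gp) :
    ↥(Sset G ρ v0 R) :=
  ⟨(σ (ρ g v0))⁻¹ * g, corr_mem D hconn hact hσ hDR g⟩

lemma sval_mem (s : ↥(Sset G ρ v0 R)) (b : Bool) (hconn : G.Connected)
    (hact : ∀ (g : Gp) (u v : V), G.Adj (ρ g u) (ρ g v) ↔ G.Adj u v) :
    G.dist v0 (ρ (cond b (s : Gp) (s : Gp)⁻¹) v0) ≤ R := by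
  cases b
  · show G.dist v0 (ρ (s : Gp)⁻¹ v0) ≤ R
    have h2 : G.dist v0 (ρ (s : Gp)⁻¹ v0) = G.dist (ρ (s : Gp) v0) v0 := by
      have h3 := dist_rho hconn hact (s : Gp) v0 (ρ (s : Gp)⁻¹ v0)
      rw [show ρ (s : Gp) (ρ (s : Gp)⁻¹ v0) = v0 by simp] at h3
      exact h3.symm
    rw [h2, SimpleGraph.dist_comm]
    exact s.2
  · exact s.2

lemma mk_single (s : ↥(Sset G ρ v0 R)) (b : Bool) :
    FreeGroup.mk [(s, b)] = cond b (FreeGroup.of s) (FreeGroup.of s)⁻¹ := by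
  cases b
  · show FreeGroup.mk [(s, false)] = _
    rw [show [(s, false)] = FreeGroup.invRev [(s, true)] from by simp [FreeGroup.invRev],
      ← FreeGroup.inv_mk]
    rfl
  · rfl

lemma piS_mk_single (s : ↥(Sset G ρ v0 R)) (b : Bool) :
    piS G ρ v0 R (FreeGroup.mk [(s, b)]) = cond b (s : Gp) (s : Gp)⁻¹ := by
  rw [mk_single]
  cases b
  · show piS G ρ v0 R (FreeGroup.of s)⁻¹ = _
    rw [map_inv, piS_of]
    rfl
  · exact piS_of G ρ v0 R s

lemma segment (hconn : G.Connected)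
    (hact : ∀ (g : Gp) (u v : V), G.Adj (ρ g u) (ρ g v) ↔ G.Adj u v)
    (hσ : ∀ v : V, G.dist (ρ (σ v) v0) v ≤ D) (hDR : 2*D+1 ≤ R) (hL : R + 3 ≤ L)
    (g : Gp) (x : ↥(Sset G ρ v0 R) × Bool) :
    ∃ (M : ℕ) (f : ℕ → V), IsChain G f M ∧ f 0 = ρ g v0 ∧
      f M = ρ (g * piS G ρ v0 R (FreeGroup.mk [x])) v0 ∧
      QuotientGroup.mk' (NN G ρ v0 R L)
          (FreeGroup.of (corrL D hconn hact hσ hDR g) * FreeGroup.mk [x]) =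
        QuotientGroup.mk' (NN G ρ v0 R L)
          (pword G ρ v0 σ R M f *
            FreeGroup.of (corrL D hconn hact hσ hDR
              (g * piS G ρ v0 R (FreeGroup.mk [x])))) := by
  obtain ⟨s, b⟩ := x
  set aval : Gp := cond b (s : Gp) (s : Gp)⁻¹ with haval
  have hpix : piS G ρ v0 R (FreeGroup.mk [(s, b)]) = aval := piS_mk_single s b
  set g' : Gp := g * aval with hg'
  set xv : V := ρ g v0 with hxv
  set xv' : V := ρ g' v0 with hxv'
  have hdist : G.dist xv xv' ≤ R := by
    have h1 : xv' = ρ g (ρ aval v0) := by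
      rw [hxv', hg', map_mul]
      rfl
    rw [h1, hxv]
    rw [dist_rho hconn hact g v0 (ρ aval v0)]
    exact sval_mem s b hconn hact
  obtain ⟨w, hw⟩ := hconn.exists_walk_length_eq_dist xv xv'
  set M := G.dist xv xv' with hM
  refine ⟨M, fun k => w.getVert k, fun k hk => w.adj_getVert_succ (by omega), w.getVert_zero, ?_, ?_⟩
  · rw [hpix, ← hg', ← hxv', ← hw]
    exact w.getVert_length
  · have hpi : piS G ρ v0 R
        ((FreeGroup.of (corrL D hconn hact hσ hDR g) * FreeGroup.mk [(s,b)])⁻¹ *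
          (pword G ρ v0 σ R M (fun k => w.getVert k) *
            FreeGroup.of (corrL D hconn hact hσ hDR g'))) = 1 := by
      rw [map_mul, map_mul, map_inv, map_mul, piS_of, piS_of, hpix,
        piS_pword D hconn hact hσ hDR M (fun k => w.getVert k)
          (fun k hk => w.adj_getVert_succ (by omega))]
      show ((σ (ρ g v0))⁻¹ * g * aval)⁻¹ *
        ((σ (w.getVert 0))⁻¹ * σ (w.getVert M) * ((σ (ρ g' v0))⁻¹ * g')) = 1
      rw [w.getVert_zero, show w.getVert M = xv' from by rw [← hw]; exact w.getVert_length,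
        hxv', hg', hxv]
      group
    have hbnd : Bnd G ρ v0 R (R + 3)
        ((FreeGroup.of (corrL D hconn hact hσ hDR g) * FreeGroup.mk [(s,b)])⁻¹ *
          (pword G ρ v0 σ R M (fun k => w.getVert k) *
            FreeGroup.of (corrL D hconn hact hσ hDR g'))) := by
      have bx : Bnd G ρ v0 R 1 (FreeGroup.mk [(s,b)]) := ⟨[(s,b)], rfl, by simp⟩
      have b1 : Bnd G ρ v0 R 2 (FreeGroup.of (corrL D hconn hact hσ hDR g) * FreeGroup.mk [(s,b)]) :=
        Bnd.mul G ρ v0 R (Bnd.of G ρ v0 R 1 le_rfl _) bx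
      have b1' : Bnd G ρ v0 R 2 (FreeGroup.of (corrL D hconn hact hσ hDR g) * FreeGroup.mk [(s,b)])⁻¹ := by
        obtain ⟨l, hl, hlen⟩ := b1
        exact ⟨FreeGroup.invRev l, by rw [← hl, ← FreeGroup.inv_mk],
          by rw [FreeGroup.invRev_length]; exact hlen⟩
      have b2 : Bnd G ρ v0 R (R + 1)
          (pword G ρ v0 σ R M (fun k => w.getVert k) *
            FreeGroup.of (corrL D hconn hact hσ hDR g')) :=
        Bnd.mul G ρ v0 R (Bnd.mono G ρ v0 R hdist (Bnd_pword G ρ v0 σ R M _))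
          (Bnd.of G ρ v0 R 1 le_rfl _)
      have := Bnd.mul G ρ v0 R b1' b2
      rw [show 2 + (R + 1) = R + 3 by omega] at this
      exact this
    have hrel : (FreeGroup.of (corrL D hconn hact hσ hDR g) * FreeGroup.mk [(s,b)])⁻¹ *
          (pword G ρ v0 σ R M (fun k => w.getVert k) *
            FreeGroup.of (corrL D hconn hact hσ hDR g')) ∈ NN G ρ v0 R L :=
      Subgroup.subset_normalClosure ⟨hpi, Bnd.mono G ρ v0 R hL hbnd⟩
    have h9 := (QuotientGroup.eq_one_iff _).mpr hrel
    have h10 : (QuotientGroup.mk' (NN G ρ v0 R L))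
        ((FreeGroup.of (corrL D hconn hact hσ hDR g) * FreeGroup.mk [(s,b)])⁻¹ *
          (pword G ρ v0 σ R M (fun k => w.getVert k) *
            FreeGroup.of (corrL D hconn hact hσ hDR g'))) = 1 := h9
    rw [map_mul, map_inv] at h10
    have h11 := inv_mul_eq_one.mp h10
    rw [hpix, ← hg']
    exact h11


lemma word_reduce (hconn : G.Connected)
    (hact : ∀ (g : Gp) (u v : V), G.Adj (ρ g u) (ρ g v) ↔ G.Adj u v)
    (hσ : ∀ v : V, G.dist (ρ (σ v) v0) v ≤ D) (hDR : 2*D+1 ≤ R) (hL : R + 3 ≤ L)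
    (A : List (↥(Sset G ρ v0 R) × Bool)) : ∀ (g : Gp),
    ∃ (M : ℕ) (f : ℕ → V), IsChain G f M ∧ f 0 = ρ g v0 ∧
      f M = ρ (g * piS G ρ v0 R (FreeGroup.mk A)) v0 ∧
      QuotientGroup.mk' (NN G ρ v0 R L)
          (FreeGroup.of (corrL D hconn hact hσ hDR g) * FreeGroup.mk A) =
        QuotientGroup.mk' (NN G ρ v0 R L)
          (pword G ρ v0 σ R M f *
            FreeGroup.of (corrL D hconn hact hσ hDR (g * piS G ρ v0 R (FreeGroup.mk A)))) := by
  induction A with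
  | nil =>
      intro g
      have hmknil : FreeGroup.mk ([] : List (↥(Sset G ρ v0 R) × Bool)) = 1 := rfl
      refine ⟨0, fun _ => ρ g v0, fun k hk => absurd hk (by omega), rfl, ?_, ?_⟩
      · rw [hmknil, map_one, mul_one]
      · rw [hmknil, pword_zero, map_one, mul_one, one_mul, mul_one]
  | cons x A' ihA =>
      intro g
      obtain ⟨M₁, f₁, hc₁, h0₁, hM₁, heq₁⟩ := segment D L hconn hact hσ hDR hL g x
      obtain ⟨M₂, f₂, hc₂, h0₂, hM₂, heq₂⟩ := ihA (g * piS G ρ v0 R (FreeGroup.mk [x]))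
      have hsplitmk : FreeGroup.mk (x :: A') = FreeGroup.mk [x] * FreeGroup.mk A' := by
        rw [FreeGroup.mul_mk]
        rfl
      have hgg : g * piS G ρ v0 R (FreeGroup.mk (x :: A')) =
          g * piS G ρ v0 R (FreeGroup.mk [x]) * piS G ρ v0 R (FreeGroup.mk A') := by
        rw [hsplitmk, map_mul, mul_assoc]
      set ff : ℕ → V := fun k => if k ≤ M₁ then f₁ k else f₂ (k - M₁) with hff
      have hjunction : f₁ M₁ = f₂ 0 := by rw [hM₁, h0₂]
      have hchain : IsChain G ff (M₁ + M₂) := by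
        intro k hk
        by_cases h1 : k + 1 ≤ M₁
        · have e1 : ff k = f₁ k := by rw [hff]; exact if_pos (by omega)
          have e2 : ff (k+1) = f₁ (k+1) := by rw [hff]; exact if_pos h1
          rw [e1, e2]
          exact hc₁ k (by omega)
        · by_cases h2 : k ≤ M₁
          · have hkM : k = M₁ := by omega
            have e1 : ff k = f₂ 0 := by
              rw [hff]
              simp only
              rw [if_pos h2, hkM, hjunction]
            have e2 : ff (k+1) = f₂ 1 := by
              rw [hff]
              simp only
              rw [if_neg (by omega), show k + 1 - M₁ = 1 by omega]
            rw [e1, e2]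
            exact hc₂ 0 (by omega)
          · have e1 : ff k = f₂ (k - M₁) := by rw [hff]; exact if_neg h2
            have e2 : ff (k+1) = f₂ ((k - M₁) + 1) := by
              rw [hff]
              simp only
              rw [if_neg (by omega), show k + 1 - M₁ = (k - M₁) + 1 by omega]
            rw [e1, e2]
            exact hc₂ (k - M₁) (by omega)
      have hcw : pword G ρ v0 σ R (M₁ + M₂) ff =
          pword G ρ v0 σ R M₁ f₁ * pword G ρ v0 σ R M₂ f₂ := by
        rw [pword_add]
        congr 1
        · refine pword_congr G ρ v0 σ R M₁ _ _ (fun k hk => ?_)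
          rw [hff]
          exact if_pos hk
        · refine pword_congr G ρ v0 σ R M₂ _ _ (fun k hk => ?_)
          rw [hff]
          simp only
          by_cases hk0 : k = 0
          · rw [hk0, if_pos (by omega), show M₁ + 0 = M₁ by omega, hjunction]
          · rw [if_neg (by omega), show M₁ + k - M₁ = k by omega]
      refine ⟨M₁ + M₂, ff, hchain, ?_, ?_, ?_⟩
      · rw [hff]
        simp only
        rw [if_pos (by omega)]
        exact h0₁
      · rw [hgg]
        by_cases hM20 : M₂ = 0
        · subst hM20
          have e1 : ff (M₁ + 0) = f₂ 0 := by
            rw [hff]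
            simp only
            rw [if_pos (by omega), show M₁ + 0 = M₁ by omega, hjunction]
          rw [e1, hM₂]
        · have e1 : ff (M₁ + M₂) = f₂ M₂ := by
            rw [hff]
            simp only
            rw [if_neg (by omega), show M₁ + M₂ - M₁ = M₂ by omega]
          rw [e1]
          exact hM₂
      · rw [hcw,
          show g * piS G ρ v0 R (FreeGroup.mk (x :: A')) =
            g * piS G ρ v0 R (FreeGroup.mk [x]) * piS G ρ v0 R (FreeGroup.mk A') from by
              rw [hsplitmk, map_mul, mul_assoc],
          hsplitmk]
        simp only [map_mul] at heq₁ heq₂ ⊢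
        calc (QuotientGroup.mk' (NN G ρ v0 R L)) (FreeGroup.of (corrL D hconn hact hσ hDR g)) *
              ((QuotientGroup.mk' (NN G ρ v0 R L)) (FreeGroup.mk [x]) *
                (QuotientGroup.mk' (NN G ρ v0 R L)) (FreeGroup.mk A'))
            = ((QuotientGroup.mk' (NN G ρ v0 R L)) (FreeGroup.of (corrL D hconn hact hσ hDR g)) *
                (QuotientGroup.mk' (NN G ρ v0 R L)) (FreeGroup.mk [x])) *
                (QuotientGroup.mk' (NN G ρ v0 R L)) (FreeGroup.mk A') := by group
          _ = ((QuotientGroup.mk' (NN G ρ v0 R L)) (pword G ρ v0 σ R M₁ f₁) *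
                (QuotientGroup.mk' (NN G ρ v0 R L)) (FreeGroup.of (corrL D hconn hact hσ hDR
                  (g * piS G ρ v0 R (FreeGroup.mk [x]))))) *
                (QuotientGroup.mk' (NN G ρ v0 R L)) (FreeGroup.mk A') := by rw [heq₁]
          _ = (QuotientGroup.mk' (NN G ρ v0 R L)) (pword G ρ v0 σ R M₁ f₁) *
                ((QuotientGroup.mk' (NN G ρ v0 R L)) (FreeGroup.of (corrL D hconn hact hσ hDR
                  (g * piS G ρ v0 R (FreeGroup.mk [x])))) *
                (QuotientGroup.mk' (NN G ρ v0 R L)) (FreeGroup.mk A')) := by group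
          _ = (QuotientGroup.mk' (NN G ρ v0 R L)) (pword G ρ v0 σ R M₁ f₁) *
                ((QuotientGroup.mk' (NN G ρ v0 R L)) (pword G ρ v0 σ R M₂ f₂) *
                (QuotientGroup.mk' (NN G ρ v0 R L)) (FreeGroup.of (corrL D hconn hact hσ hDR
                  (g * piS G ρ v0 R (FreeGroup.mk [x]) * piS G ρ v0 R (FreeGroup.mk A'))))) := by
                    rw [heq₂]
          _ = (QuotientGroup.mk' (NN G ρ v0 R L)) (pword G ρ v0 σ R M₁ f₁) *
                (QuotientGroup.mk' (NN G ρ v0 R L)) (pword G ρ v0 σ R M₂ f₂) *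
                (QuotientGroup.mk' (NN G ρ v0 R L)) (FreeGroup.of (corrL D hconn hact hσ hDR
                  (g * piS G ρ v0 R (FreeGroup.mk [x]) * piS G ρ v0 R (FreeGroup.mk A')))) := by
                    group


lemma ker_le_NN (hconn : G.Connected)
    (hact : ∀ (g : Gp) (u v : V), G.Adj (ρ g u) (ρ g v) ↔ G.Adj u v)
    (hσ : ∀ v : V, G.dist (ρ (σ v) v0) v ≤ D) (hσ0 : σ v0 = 1) (hDR : 2*D+1 ≤ R)
    (hL : R + 3 ≤ L) (θ : ℕ)
    (hθ : ∀ (k : ℕ) (c : ZMod k → V), 0 < k → IsCycle G k c → IsIsometricCycle G k c → k ≤ θ)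
    (hLθ : θ + 2 ≤ L)
    (w : FreeGroup ↥(Sset G ρ v0 R)) (hw : piS G ρ v0 R w = 1) : w ∈ NN G ρ v0 R L := by
  obtain ⟨M, f, hc, h0, hM, heq⟩ :=
    word_reduce D L hconn hact hσ hDR hL w.toWord (1 : Gp)
  rw [FreeGroup.mk_toWord] at hM heq
  rw [hw, mul_one] at hM heq
  have hone1 : ρ (1 : Gp) v0 = v0 := by simp
  rw [hone1] at h0 hM
  have hcorr1 : ((corrL D hconn hact hσ hDR (1 : Gp)) : Gp) = 1 := by
    show (σ (ρ (1:Gp) v0))⁻¹ * 1 = 1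
    rw [hone1, hσ0]
    group
  have hφcorr1 : QuotientGroup.mk' (NN G ρ v0 R L)
      (FreeGroup.of (corrL D hconn hact hσ hDR (1 : Gp))) = 1 := by
    apply (QuotientGroup.eq_one_iff _).mpr
    apply Subgroup.subset_normalClosure
    refine ⟨?_, Bnd.mono G ρ v0 R (by omega : 1 ≤ L) (Bnd.of G ρ v0 R 1 le_rfl _)⟩
    rw [piS_of, hcorr1]
  have hφpw : QuotientGroup.mk' (NN G ρ v0 R L) (pword G ρ v0 σ R M f) = 1 :=
    phi_pword_closed D L hconn hact hσ hDR θ hθ hLθ M f hc (by rw [hM, h0])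
  rw [map_mul, map_mul, hφcorr1, hφpw, one_mul, one_mul] at heq
  apply (QuotientGroup.eq_one_iff _).mp
  exact heq
  
lemma piS_surjective (hconn : G.Connected)
    (hact : ∀ (g : Gp) (u v : V), G.Adj (ρ g u) (ρ g v) ↔ G.Adj u v)
    (hσ : ∀ v : V, G.dist (ρ (σ v) v0) v ≤ D) (hσ0 : σ v0 = 1) (hDR : 2*D+1 ≤ R) :
    Function.Surjective (piS G ρ v0 R) := by
  intro g
  obtain ⟨w, hw⟩ := hconn.exists_walk_length_eq_dist v0 (ρ g v0)
  refine ⟨pword G ρ v0 σ R w.length (fun k => w.getVert k) *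
    FreeGroup.of (corrL D hconn hact hσ hDR g), ?_⟩
  rw [map_mul, piS_of,
    piS_pword D hconn hact hσ hDR w.length (fun k => w.getVert k)
      (fun k hk => w.adj_getVert_succ (by omega))]
  show (σ (w.getVert 0))⁻¹ * σ (w.getVert w.length) * ((σ (ρ g v0))⁻¹ * g) = g
  rw [w.getVert_zero, w.getVert_length, hσ0]
  group


-- ### finiteness

lemma fixers_finite (hproper : ∀ v : V, {g : Gp | ρ g v = v}.Finite) (x u : V) :
    {g : Gp | ρ g x = u}.Finite := by
  by_cases hne : {g : Gp | ρ g x = u}.Nonempty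
  · obtain ⟨g₀, hg₀⟩ := hne
    have hsub : {g : Gp | ρ g x = u} ⊆ (fun h => g₀ * h) '' {h : Gp | ρ h x = x} := by
      intro g hg
      refine ⟨g₀⁻¹ * g, ?_, by group⟩
      show ρ (g₀⁻¹ * g) x = x
      rw [map_mul]
      show ρ g₀⁻¹ (ρ g x) = x
      rw [show ρ g x = u from hg, ← hg₀]
      simp
    exact (((hproper x).image _)).subset hsub
  · rw [Set.not_nonempty_iff_eq_empty] at hne
    rw [hne]
    exact Set.finite_empty

lemma nbr_finite (hproper : ∀ v : V, {g : Gp | ρ g v = v}.Finite)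
    {E₀ : Finset (V × V)}
    (hedge : ∀ u v : V, G.Adj u v → ∃ g : Gp, ∃ e ∈ E₀, ρ g e.1 = u ∧ ρ g e.2 = v)
    (u : V) : {v : V | G.Adj u v}.Finite := by
  have hsub : {v : V | G.Adj u v} ⊆
      ⋃ e ∈ E₀, (fun g : Gp => ρ g e.2) '' {g : Gp | ρ g e.1 = u} := by
    intro v hv
    obtain ⟨g, e, he, h1, h2⟩ := hedge u v hv
    exact Set.mem_biUnion he ⟨g, h1, h2⟩
  exact (Set.Finite.biUnion E₀.finite_toSet
    (fun e _ => (fixers_finite hproper e.1 u).image _)).subset hsub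

lemma dist_getVert_le (hconn : G.Connected) {u v : V} (w : G.Walk u v) :
    ∀ k : ℕ, G.dist u (w.getVert k) ≤ k := by
  induction w with
  | nil =>
      intro k
      rw [SimpleGraph.Walk.getVert_of_length_le _ (by simp : (SimpleGraph.Walk.nil : G.Walk _ _).length ≤ k)]
      simp [SimpleGraph.dist_self]
  | @cons a b cvert h p ih =>
      intro k
      cases k with
      | zero => simp [SimpleGraph.Walk.getVert_zero, SimpleGraph.dist_self]
      | succ k =>
          rw [SimpleGraph.Walk.getVert_cons_succ]
          have h1 : G.dist a (p.getVert k) ≤ G.dist a b + G.dist b (p.getVert k) :=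
            hconn.dist_triangle
          have h2 : G.dist a b = 1 := SimpleGraph.dist_eq_one_iff_adj.mpr h
          have h3 := ih k
          omega

lemma ball_finite (hconn : G.Connected)
    (hproper : ∀ v : V, {g : Gp | ρ g v = v}.Finite)
    {E₀ : Finset (V × V)}
    (hedge : ∀ u v : V, G.Adj u v → ∃ g : Gp, ∃ e ∈ E₀, ρ g e.1 = u ∧ ρ g e.2 = v)
    (r : ℕ) : {v : V | G.dist v0 v ≤ r}.Finite := by
  induction r with
  | zero =>
      refine (Set.finite_singleton v0).subset ?_
      intro v hv
      have : G.dist v0 v = 0 := by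
        have := hv
        simp only [Set.mem_setOf_eq] at this
        omega
      have := (hconn.dist_eq_zero_iff).mp this
      simp [← this]
  | succ r ih =>
      have hsub : {v : V | G.dist v0 v ≤ r + 1} ⊆
          {v : V | G.dist v0 v ≤ r} ∪ ⋃ u ∈ {v : V | G.dist v0 v ≤ r}, {v : V | G.Adj u v} := by
        intro v hv
        simp only [Set.mem_setOf_eq] at hv
        by_cases hd : G.dist v0 v ≤ r
        · exact Or.inl hd
        · have hd1 : G.dist v0 v = r + 1 := by omega
          obtain ⟨w, hw⟩ := hconn.exists_walk_length_eq_dist v0 v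
          right
          have hadj := w.adj_getVert_succ (i := r) (by omega)
          rw [show r + 1 = w.length by omega, w.getVert_length] at hadj
          refine Set.mem_biUnion ?_ hadj
          show G.dist v0 (w.getVert r) ≤ r
          exact dist_getVert_le hconn w r
      exact (ih.union (Set.Finite.biUnion ih (fun u _ => nbr_finite hproper hedge u))).subset hsub

lemma Sset_finite (hconn : G.Connected)
    (hproper : ∀ v : V, {g : Gp | ρ g v = v}.Finite)
    {E₀ : Finset (V × V)}
    (hedge : ∀ u v : V, G.Adj u v → ∃ g : Gp, ∃ e ∈ E₀, ρ g e.1 = u ∧ ρ g e.2 = v) :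
    (Sset G ρ v0 R).Finite := by
  have hsub : Sset G ρ v0 R ⊆
      ⋃ u ∈ {v : V | G.dist v0 v ≤ R}, {g : Gp | ρ g v0 = u} := by
    intro g hg
    exact Set.mem_biUnion hg rfl
  exact (Set.Finite.biUnion (ball_finite hconn hproper hedge R)
    (fun u _ => fixers_finite hproper v0 u)).subset hsub

lemma Rels_finite (hS : (Sset G ρ v0 R).Finite) (L : ℕ) : (Rels G ρ v0 R L).Finite := by
  haveI : Finite ↥(Sset G ρ v0 R) := hS.to_subtype
  have hsub : Rels G ρ v0 R L ⊆
      FreeGroup.mk '' {l : List (↥(Sset G ρ v0 R) × Bool) | l.length ≤ L} := by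
    rintro w ⟨-, l, hl, hlen⟩
    exact ⟨l, hlen, hl⟩
  exact ((List.finite_length_le _ L).image _).subset hsub

end Presentation

/-- Corollary `fundgroup`.  Every shortcut group is finitely presented.
In particular, if a group `G` acts by graph automorphisms on a connected simplicial graph
`Γ` with finite vertex stabilizers and finitely many orbits of vertices and edges, and there
is a bound `θ` on the lengths of the isometric cycles of `Γ`, then `G` admits a finite
presentation. -/
theorem cor_fundgroup (Gp : Type) [Group Gp] {V : Type} (G : SimpleGraph V)
    (hconn : G.Connected) (ρ : Gp →* Equiv.Perm V)
    (hact : IsGraphAction Gp G ρ) (hproper : ProperAction Gp ρ)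
    (hcocompact : CocompactAction Gp G ρ) (θ : ℕ)
    (hθ : ∀ (n : ℕ) (c : ZMod n → V), 0 < n → IsCycle G n c → IsIsometricCycle G n c → n ≤ θ) :
    FinitelyPresentedGroup Gp := by
  have v0 : V := hconn.nonempty.some
  obtain ⟨⟨V₀, hV₀⟩, ⟨E₀, hE₀⟩⟩ := hcocompact
  choose gf uf hmem hval using hV₀
  set D := V₀.sup (fun u => G.dist v0 u) with hD
  set σ : V → Gp := fun v => if v = v0 then 1 else gf v with hσdef
  have hact' : ∀ (g : Gp) (u v : V), G.Adj (ρ g u) (ρ g v) ↔ G.Adj u v := hact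
  have hproper' : ∀ v : V, {g : Gp | ρ g v = v}.Finite := hproper
  have hσ : ∀ v : V, G.dist (ρ (σ v) v0) v ≤ D := by
    intro v
    by_cases hv : v = v0
    · subst hv
      rw [hσdef]
      simp [SimpleGraph.dist_self]
    · rw [hσdef]
      simp only
      rw [if_neg hv]
      have h1 : ρ (gf v) (uf v) = v := hval v
      calc G.dist (ρ (gf v) v0) v = G.dist (ρ (gf v) v0) (ρ (gf v) (uf v)) := by rw [h1]
        _ = G.dist v0 (uf v) := dist_rho hconn hact' (gf v) v0 (uf v)
        _ ≤ D := Finset.le_sup (hmem v)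
  have hσ0 : σ v0 = 1 := by rw [hσdef]; simp
  set R := 2*D+1 with hR
  set L := θ + R + 5 with hL
  have hSfin : (Sset G ρ v0 R).Finite := Sset_finite hconn hproper' hE₀
  have hRelsFin : (Rels G ρ v0 R L).Finite := Rels_finite hSfin L
  have hsurj : Function.Surjective (piS G ρ v0 R) :=
    piS_surjective D hconn hact' hσ hσ0 (by omega)
  have hker : NN G ρ v0 R L = MonoidHom.ker (piS G ρ v0 R) := by
    apply le_antisymm
    · apply Subgroup.normalClosure_le_normal
      intro w hw
      exact MonoidHom.mem_ker.mpr hw.1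
    · intro w hw
      exact ker_le_NN D L hconn hact' hσ hσ0 (by omega) (by omega) θ hθ (by omega) w
        (MonoidHom.mem_ker.mp hw)
  haveI : Fintype ↥(Sset G ρ v0 R) := hSfin.fintype
  set e := Fintype.equivFin ↥(Sset G ρ v0 R) with he
  have hNCeq : Subgroup.normalClosure
      ((hRelsFin.toFinset : Finset (FreeGroup ↥(Sset G ρ v0 R))) : Set (FreeGroup ↥(Sset G ρ v0 R)))
        = MonoidHom.ker (piS G ρ v0 R) := by
    rw [Set.Finite.coe_toFinset]
    exact hker
  refine ⟨Fintype.card ↥(Sset G ρ v0 R),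
    Finset.image (FreeGroup.freeGroupCongr e) hRelsFin.toFinset, ?_⟩
  rw [Finset.coe_image]
  have E1 : PresentedGroup
      ((hRelsFin.toFinset : Finset (FreeGroup ↥(Sset G ρ v0 R))) : Set (FreeGroup ↥(Sset G ρ v0 R)))
        ≃* Gp :=
    (QuotientGroup.quotientMulEquivOfEq hNCeq).trans
      (QuotientGroup.quotientKerEquivOfSurjective _ hsurj)
  exact ⟨E1.symm.trans (PresentedGroup.equivPresentedGroup
    (rels := (hRelsFin.toFinset : Set (FreeGroup ↥(Sset G ρ v0 R)))) e)⟩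

end ShortcutGraphs
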